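/- arXiv:2307.04763 — 4 statements merged into one kernel-verified Lean document; each statement's English description precedes it below -/
import Mathlib

section
/- If Γ is a lift of a curve γ into the nullcone with det(Γ, Γ', Γ'') = −(h')³ for a smooth change of parameter h with h' > 0, then (h')⁻¹·(Γ∘h) is a Wilczynski lift; consequently the strain densities of γ and γ∘h satisfy a_{γ∘h} = h' · (a_γ ∘ h). -/
/-- The Hermitian form ⟨z,w⟩ = i(z̄₁w₃ − z̄₃w₁) + z̄₂w₂ on ℂ³. -/
def hermB (z w : Fin 3 → ℂ) : ℂ :=
  Complex.I * ((starRingEnd ℂ) (z 0) * w 2 - (starRingEnd ℂ) (z 2) * w 0) +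
    (starRingEnd ℂ) (z 1) * w 1

/-- The rescaled reparametrized lift (h')⁻¹ · (Γ∘h). -/
noncomputable def rescaledLift (Γ : ℝ → Fin 3 → ℂ) (h : ℝ → ℝ) : ℝ → Fin 3 → ℂ :=
  fun t => (((deriv h t : ℝ) : ℂ))⁻¹ • Γ (h t)

private lemma det3_aux (g g' g'' : Fin 3 → ℂ) (a a' a'' : ℂ) :
    Matrix.det (Matrix.of ![a • g, a • g' + a' • g,
      (a • g'' + a' • g') + (a' • g' + a'' • g)]) =
    a ^ 3 * Matrix.det (Matrix.of ![g, g', g'']) := by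
  simp only [Matrix.det_fin_three, Matrix.of_apply, Matrix.cons_val', Matrix.cons_val_zero,
    Matrix.cons_val_one, Matrix.head_cons, Matrix.empty_val', Matrix.cons_val_fin_one,
    Matrix.head_fin_const, Matrix.cons_val_two, Matrix.tail_cons, Pi.add_apply, Pi.smul_apply,
    smul_eq_mul]
  ring

private lemma hermB_aux (g g' : Fin 3 → ℂ) (a d : ℂ) (r : ℝ)
    (ha : (starRingEnd ℂ) a = a) (hg : hermB g g = 0) :
    hermB (a • g) (a • (r • g') + d • g) = a * a * (r : ℂ) * hermB g g' := by
  simp only [hermB, Pi.add_apply, Pi.smul_apply, smul_eq_mul, Complex.real_smul,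
    map_mul, ha] at hg ⊢
  linear_combination (a * d) * hg

/-- If Γ is a lift into the nullcone such that det(Γ∘h, (Γ∘h)', (Γ∘h)'') = −(h')³ for a
smooth change of parameter h with h' > 0, then (h')⁻¹·(Γ∘h) is a Wilczynski lift
(its Wronskian determinant is −1), and consequently the strain densities
a = i⟨Γ,Γ'⟩⁻¹ satisfy a_{γ∘h} = h'·(a_γ∘h). -/
theorem wilczynski_lift_reparam (Γ : ℝ → Fin 3 → ℂ) (h : ℝ → ℝ)
    (hΓ : ContDiff ℝ (⊤ : ℕ∞) Γ) (hh : ContDiff ℝ (⊤ : ℕ∞) h) (hh' : ∀ t, 0 < deriv h t)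
    (hnull : ∀ t, hermB (Γ t) (Γ t) = 0)
    (hdet : ∀ t, Matrix.det (Matrix.of
        ![Γ (h t), deriv (fun u => Γ (h u)) t, deriv (deriv (fun u => Γ (h u))) t]) =
      -(((deriv h t : ℝ) : ℂ)) ^ 3) :
    (∀ t, Matrix.det (Matrix.of
        ![rescaledLift Γ h t, deriv (rescaledLift Γ h) t,
          deriv (deriv (rescaledLift Γ h)) t]) = -1) ∧
    (∀ t, Complex.I * (hermB (rescaledLift Γ h t) (deriv (rescaledLift Γ h) t))⁻¹ =
      ((deriv h t : ℝ) : ℂ) * (Complex.I * (hermB (Γ (h t)) (deriv Γ (h t)))⁻¹)) := by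
  have hΓ : ContDiff ℝ ((⊤ : ℕ∞) : WithTop ℕ∞) Γ := hΓ.of_le (by simp)
  have hh : ContDiff ℝ ((⊤ : ℕ∞) : WithTop ℕ∞) h := hh.of_le (by simp)
  have hbne : ∀ t, ((deriv h t : ℝ) : ℂ) ≠ 0 := fun t =>
    Complex.ofReal_ne_zero.mpr (hh' t).ne'
  have hdh : ContDiff ℝ ((⊤ : ℕ∞) : WithTop ℕ∞) (deriv h) := (contDiff_infty_iff_deriv.mp hh).2
  have hb : ContDiff ℝ ((⊤ : ℕ∞) : WithTop ℕ∞) (fun t => ((deriv h t : ℝ) : ℂ)) :=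
    Complex.ofRealCLM.contDiff.comp hdh
  have hc : ContDiff ℝ ((⊤ : ℕ∞) : WithTop ℕ∞) (fun t => (((deriv h t : ℝ) : ℂ))⁻¹) := hb.inv hbne
  have hcd : Differentiable ℝ (fun t => (((deriv h t : ℝ) : ℂ))⁻¹) :=
    hc.differentiable (by simp)
  have hc' : ContDiff ℝ ((⊤ : ℕ∞) : WithTop ℕ∞) (deriv fun t => (((deriv h t : ℝ) : ℂ))⁻¹) :=
    (contDiff_infty_iff_deriv.mp hc).2
  have hc'd : Differentiable ℝ (deriv fun t => (((deriv h t : ℝ) : ℂ))⁻¹) :=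
    hc'.differentiable (by simp)
  have hG : ContDiff ℝ ((⊤ : ℕ∞) : WithTop ℕ∞) (fun u => Γ (h u)) := hΓ.comp hh
  have hGd : Differentiable ℝ (fun u => Γ (h u)) := hG.differentiable (by simp)
  have hG' : ContDiff ℝ ((⊤ : ℕ∞) : WithTop ℕ∞) (deriv fun u => Γ (h u)) := (contDiff_infty_iff_deriv.mp hG).2
  have hG'd : Differentiable ℝ (deriv fun u => Γ (h u)) := hG'.differentiable (by simp)
  have hR1 : deriv (rescaledLift Γ h) = fun t =>
      (((deriv h t : ℝ) : ℂ))⁻¹ • deriv (fun u => Γ (h u)) t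
        + deriv (fun s => (((deriv h s : ℝ) : ℂ))⁻¹) t • Γ (h t) := by
    funext t
    exact ((hcd t).hasDerivAt.smul (hGd t).hasDerivAt).deriv
  have hR2 : deriv (deriv (rescaledLift Γ h)) = fun t =>
      ((((deriv h t : ℝ) : ℂ))⁻¹ • deriv (deriv fun u => Γ (h u)) t
        + deriv (fun s => (((deriv h s : ℝ) : ℂ))⁻¹) t • deriv (fun u => Γ (h u)) t)
      + (deriv (fun s => (((deriv h s : ℝ) : ℂ))⁻¹) t • deriv (fun u => Γ (h u)) t
        + deriv (deriv fun s => (((deriv h s : ℝ) : ℂ))⁻¹) t • Γ (h t)) := by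
    rw [hR1]
    funext t
    have h1 := ((hcd t).hasDerivAt.smul (hG'd t).hasDerivAt)
    have h2 := ((hc'd t).hasDerivAt.smul (hGd t).hasDerivAt)
    exact (h1.add h2).deriv
  have hchain : ∀ t, deriv (fun u => Γ (h u)) t = deriv h t • deriv Γ (h t) := by
    intro t
    have := (HasDerivAt.scomp t ((hΓ.differentiable (by simp) (h t)).hasDerivAt)
      ((hh.differentiable (by simp) t).hasDerivAt)).deriv
    simpa [Function.comp_def] using this
  constructor
  · intro t
    have e1 : rescaledLift Γ h t = (((deriv h t : ℝ) : ℂ))⁻¹ • Γ (h t) := rfl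
    rw [e1]
    simp only [hR2]
    simp only [hR1]
    rw [det3_aux, hdet t]
    field_simp [hbne t]
  · intro t
    have e1 : rescaledLift Γ h t = (((deriv h t : ℝ) : ℂ))⁻¹ • Γ (h t) := rfl
    rw [e1]
    simp only [hR1, hchain t]
    rw [hermB_aux (Γ (h t)) (deriv Γ (h t)) _ _ _ (by simp) (hnull (h t))]
    have hb := hbne t
    set X := hermB (Γ (h t)) (deriv Γ (h t))
    set b : ℂ := ((deriv h t : ℝ) : ℂ)
    have : b⁻¹ * b⁻¹ * b * X = b⁻¹ * X := by field_simp
    rw [this, mul_inv, inv_inv]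
    ring
end

section
/- Let κ, τ : J → ℝ be smooth and let K(s) be the 3×3 matrix with rows (iκ, −i, τ), (0, −2iκ, 1), (1, 0, iκ), and let L(s) be the 3×3 matrix with rows (0, iτ' + 3(1−τκ), 2iτ), (τ, 0, τ' + 3i(1−τκ)), (3i, −iτ, 0). Then the Lax equation L' = [L, K] holds if and only if 2κτ' + τκ' = 0 and τ'' + 9κ(1 − τκ) − τ² = 0. -/
/-- The Frenet-type matrix K_{κ,τ}(s). -/
noncomputable def Kmat (κ τ : ℝ → ℝ) (s : ℝ) : Matrix (Fin 3) (Fin 3) ℂ :=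
  !![Complex.I * (κ s : ℂ), -Complex.I, (τ s : ℂ);
     0, -2 * Complex.I * (κ s : ℂ), 1;
     1, 0, Complex.I * (κ s : ℂ)]

/-- The matrix L(s) of the Lax pair. -/
noncomputable def Lmat (κ τ : ℝ → ℝ) (s : ℝ) : Matrix (Fin 3) (Fin 3) ℂ :=
  !![0, Complex.I * ((deriv τ s : ℝ) : ℂ) + 3 * (1 - (τ s : ℂ) * (κ s : ℂ)),
       2 * Complex.I * (τ s : ℂ);
     (τ s : ℂ), 0, ((deriv τ s : ℝ) : ℂ) + 3 * Complex.I * (1 - (τ s : ℂ) * (κ s : ℂ));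
     3 * Complex.I, -Complex.I * (τ s : ℂ), 0]

/-- The Lax equation L' = [L,K] holds if and only if the Euler--Lagrange equations
2κτ' + τκ' = 0 and τ'' + 9κ(1−τκ) − τ² = 0 hold. -/
theorem lax_iff_euler_lagrange (κ τ : ℝ → ℝ) (hκ : ContDiff ℝ (⊤ : ℕ∞) κ) (hτ : ContDiff ℝ (⊤ : ℕ∞) τ) :
    (∀ s : ℝ, ∀ i j : Fin 3,
      deriv (fun t => Lmat κ τ t i j) s =
        (Lmat κ τ s * Kmat κ τ s - Kmat κ τ s * Lmat κ τ s) i j) ↔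
    (∀ s : ℝ,
      2 * κ s * deriv τ s + τ s * deriv κ s = 0 ∧
      deriv (deriv τ) s + 9 * κ s * (1 - τ s * κ s) - (τ s) ^ 2 = 0) := by
  have hκd : Differentiable ℝ κ := hκ.differentiable (by simp)
  have hτd : Differentiable ℝ τ := hτ.differentiable (by simp)
  have hτ'd : Differentiable ℝ (deriv τ) :=
    (contDiff_infty_iff_deriv.mp (hτ.of_le (by simp))).2.differentiable (by simp)
  have hT : ∀ s : ℝ, HasDerivAt (fun t => ((τ t : ℝ) : ℂ)) ((deriv τ s : ℝ) : ℂ) s :=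
    fun s => ((hτd s).hasDerivAt).ofReal_comp
  have hKc : ∀ s : ℝ, HasDerivAt (fun t => ((κ t : ℝ) : ℂ)) ((deriv κ s : ℝ) : ℂ) s :=
    fun s => ((hκd s).hasDerivAt).ofReal_comp
  have hT' : ∀ s : ℝ, HasDerivAt (fun t => ((deriv τ t : ℝ) : ℂ))
      ((deriv (deriv τ) s : ℝ) : ℂ) s := fun s => ((hτ'd s).hasDerivAt).ofReal_comp
  -- derivative of each entry of L
  have d00 : ∀ s : ℝ, deriv (fun t => Lmat κ τ t 0 0) s = 0 := by
    intro s
    have e : (fun t => Lmat κ τ t 0 0) = fun _ => (0 : ℂ) := by funext t; simp [Lmat]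
    rw [e, deriv_const]
  have d11 : ∀ s : ℝ, deriv (fun t => Lmat κ τ t 1 1) s = 0 := by
    intro s
    have e : (fun t => Lmat κ τ t 1 1) = fun _ => (0 : ℂ) := by funext t; simp [Lmat]
    rw [e, deriv_const]
  have d22 : ∀ s : ℝ, deriv (fun t => Lmat κ τ t 2 2) s = 0 := by
    intro s
    have e : (fun t => Lmat κ τ t 2 2) = fun _ => (0 : ℂ) := by funext t; simp [Lmat]
    rw [e, deriv_const]
  have d20 : ∀ s : ℝ, deriv (fun t => Lmat κ τ t 2 0) s = 0 := by
    intro s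
    have e : (fun t => Lmat κ τ t 2 0) = fun _ => (3 * Complex.I : ℂ) := by
      funext t; simp [Lmat]
    rw [e, deriv_const]
  have d01 : ∀ s : ℝ, deriv (fun t => Lmat κ τ t 0 1) s =
      Complex.I * ((deriv (deriv τ) s : ℝ) : ℂ) -
        3 * (((deriv τ s : ℝ) : ℂ) * (κ s : ℂ) + (τ s : ℂ) * ((deriv κ s : ℝ) : ℂ)) := by
    intro s
    have e : (fun t => Lmat κ τ t 0 1) =
        fun t => Complex.I * ((deriv τ t : ℝ) : ℂ) + 3 * (1 - (τ t : ℂ) * (κ t : ℂ)) := by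
      funext t; simp [Lmat]
    rw [e]
    have h := ((hT' s).const_mul Complex.I).add
      (((hasDerivAt_const s (1 : ℂ)).sub ((hT s).mul (hKc s))).const_mul 3)
    exact h.deriv.trans (by ring)
  have d02 : ∀ s : ℝ, deriv (fun t => Lmat κ τ t 0 2) s =
      2 * Complex.I * ((deriv τ s : ℝ) : ℂ) := by
    intro s
    have e : (fun t => Lmat κ τ t 0 2) = fun t => 2 * Complex.I * ((τ t : ℝ) : ℂ) := by
      funext t; simp [Lmat]
    rw [e]
    have h := (hT s).const_mul (2 * Complex.I)
    rw [h.deriv]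
  have d10 : ∀ s : ℝ, deriv (fun t => Lmat κ τ t 1 0) s = ((deriv τ s : ℝ) : ℂ) := by
    intro s
    have e : (fun t => Lmat κ τ t 1 0) = fun t => ((τ t : ℝ) : ℂ) := by
      funext t; simp [Lmat]
    rw [e, (hT s).deriv]
  have d12 : ∀ s : ℝ, deriv (fun t => Lmat κ τ t 1 2) s =
      ((deriv (deriv τ) s : ℝ) : ℂ) -
        3 * Complex.I * (((deriv τ s : ℝ) : ℂ) * (κ s : ℂ) + (τ s : ℂ) * ((deriv κ s : ℝ) : ℂ)) := by
    intro s
    have e : (fun t => Lmat κ τ t 1 2) =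
        fun t => ((deriv τ t : ℝ) : ℂ) + 3 * Complex.I * (1 - (τ t : ℂ) * (κ t : ℂ)) := by
      funext t; simp [Lmat]
    rw [e]
    have h := (hT' s).add
      (((hasDerivAt_const s (1 : ℂ)).sub ((hT s).mul (hKc s))).const_mul (3 * Complex.I))
    exact h.deriv.trans (by ring)
  have d21 : ∀ s : ℝ, deriv (fun t => Lmat κ τ t 2 1) s =
      -Complex.I * ((deriv τ s : ℝ) : ℂ) := by
    intro s
    have e : (fun t => Lmat κ τ t 2 1) = fun t => -Complex.I * ((τ t : ℝ) : ℂ) := by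
      funext t; simp [Lmat]
    rw [e]
    have h := (hT s).const_mul (-Complex.I)
    rw [h.deriv]
  constructor
  · intro h s
    have h1 := h s 0 1
    rw [d01 s] at h1
    simp [Lmat, Kmat, Matrix.mul_apply, Fin.sum_univ_three] at h1
    have h2 : ((-(3 * (2 * κ s * deriv τ s + τ s * deriv κ s)) : ℝ) : ℂ) +
        ((deriv (deriv τ) s + 9 * κ s * (1 - τ s * κ s) - (τ s) ^ 2 : ℝ) : ℂ) * Complex.I
        = 0 := by
      push_cast
      linear_combination h1 - 3 * ((κ s : ℂ) * ((deriv τ s : ℝ) : ℂ)) * Complex.I_sq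
    rw [Complex.ext_iff] at h2
    simp only [Complex.add_re, Complex.ofReal_re, Complex.mul_re, Complex.I_re,
      Complex.ofReal_im, Complex.I_im, Complex.add_im, Complex.mul_im, Complex.zero_re,
      Complex.zero_im] at h2
    constructor
    · nlinarith [h2.1]
    · nlinarith [h2.2]
  · intro h s i j
    have e1 : ((2 * κ s * deriv τ s + τ s * deriv κ s : ℝ) : ℂ) = 0 := by
      exact_mod_cast congrArg (fun x : ℝ => (x : ℂ)) (h s).1
    have e2 : ((deriv (deriv τ) s + 9 * κ s * (1 - τ s * κ s) - (τ s) ^ 2 : ℝ) : ℂ) = 0 := by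
      exact_mod_cast congrArg (fun x : ℝ => (x : ℂ)) (h s).2
    push_cast at e1 e2
    fin_cases i <;> fin_cases j <;>
      simp only [Fin.zero_eta, Fin.mk_one, Fin.reduceFinMk, Fin.isValue]
    · rw [d00 s]
      simp [Lmat, Kmat, Matrix.mul_apply, Fin.sum_univ_three]
      ring
    · rw [d01 s]
      simp [Lmat, Kmat, Matrix.mul_apply, Fin.sum_univ_three]
      linear_combination Complex.I * e2 - 3 * e1 + 3 * (κ s : ℂ) * ((deriv τ s : ℝ) : ℂ) * Complex.I_sq
    · rw [d02 s]
      simp [Lmat, Kmat, Matrix.mul_apply, Fin.sum_univ_three]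
      linear_combination (-3 + 3 * (κ s : ℂ) * (τ s : ℂ)) * Complex.I_sq
    · rw [d10 s]
      simp [Lmat, Kmat, Matrix.mul_apply, Fin.sum_univ_three]
      ring
    · rw [d11 s]
      simp [Lmat, Kmat, Matrix.mul_apply, Fin.sum_univ_three]
      ring
    · rw [d12 s]
      simp [Lmat, Kmat, Matrix.mul_apply, Fin.sum_univ_three]
      linear_combination e2 - 3 * Complex.I * e1 + (-9 * (κ s : ℂ) + 9 * (κ s : ℂ) ^ 2 * (τ s : ℂ)) * Complex.I_sq
    · rw [d20 s]
      simp [Lmat, Kmat, Matrix.mul_apply, Fin.sum_univ_three]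
      ring
    · rw [d21 s]
      simp [Lmat, Kmat, Matrix.mul_apply, Fin.sum_univ_three]
      linear_combination (3 - 3 * (κ s : ℂ) * (τ s : ℂ)) * Complex.I_sq
    · rw [d22 s]
      simp [Lmat, Kmat, Matrix.mul_apply, Fin.sum_univ_three]
      ring
end

section
/- Let κ, τ : J → ℝ be smooth solutions of 2κτ' + τκ' = 0 and τ'' + 9κ(1 − τκ) − τ² = 0 on an interval J. Then the functions κτ² and −18κτ + 9κ²τ² − (2/3)τ³ + (τ')² are constant on J. -/
lemma const_of_hasDerivAt_zero (J : Set ℝ) (hJ : Convex ℝ J) (f : ℝ → ℝ)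
    (hf : ∀ x ∈ J, HasDerivAt f 0 x) : ∀ s ∈ J, ∀ t ∈ J, f s = f t := by
  intro s hs t ht
  have h := Convex.norm_image_sub_le_of_norm_hasDerivWithin_le (C := 0) (f' := fun _ => (0 : ℝ))
    (fun x hx => (hf x hx).hasDerivWithinAt) (fun x hx => by simp) hJ hs ht
  simp only [Real.norm_eq_abs, zero_mul] at h
  have := abs_nonpos_iff.mp (le_trans h le_rfl)
  linarith

/-- Along smooth solutions of the Euler--Lagrange equations 2κτ' + τκ' = 0 and
τ'' + 9κ(1−τκ) − τ² = 0 on an interval J, the quantities κτ² and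
−18κτ + 9κ²τ² − (2/3)τ³ + (τ')² are constant. -/
theorem conservation_laws (J : Set ℝ) (hJ : Convex ℝ J) (κ τ : ℝ → ℝ)
    (hκ : ContDiff ℝ (⊤ : ℕ∞) κ) (hτ : ContDiff ℝ (⊤ : ℕ∞) τ)
    (h1 : ∀ s ∈ J, 2 * κ s * deriv τ s + τ s * deriv κ s = 0)
    (h2 : ∀ s ∈ J, deriv (deriv τ) s + 9 * κ s * (1 - τ s * κ s) - (τ s) ^ 2 = 0) :
    (∀ s ∈ J, ∀ t ∈ J, κ s * (τ s) ^ 2 = κ t * (τ t) ^ 2) ∧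
    (∀ s ∈ J, ∀ t ∈ J,
      -18 * κ s * τ s + 9 * (κ s) ^ 2 * (τ s) ^ 2 - (2 / 3) * (τ s) ^ 3 + (deriv τ s) ^ 2 =
      -18 * κ t * τ t + 9 * (κ t) ^ 2 * (τ t) ^ 2 - (2 / 3) * (τ t) ^ 3 + (deriv τ t) ^ 2) := by
  have hτ2 : ContDiff ℝ (⊤ : ℕ∞) (deriv τ) :=
    (contDiff_infty_iff_deriv.mp (hτ.of_le (by simp))).2
  have hdκ : ∀ x : ℝ, HasDerivAt κ (deriv κ x) x :=
    fun x => (hκ.differentiable (by simp) x).hasDerivAt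
  have hdτ : ∀ x : ℝ, HasDerivAt τ (deriv τ x) x :=
    fun x => (hτ.differentiable (by simp) x).hasDerivAt
  have hdτ' : ∀ x : ℝ, HasDerivAt (deriv τ) (deriv (deriv τ) x) x :=
    fun x => (hτ2.differentiable (by simp) x).hasDerivAt
  constructor
  · apply const_of_hasDerivAt_zero J hJ
    intro x hx
    have h : HasDerivAt (fun s => κ s * (τ s) ^ 2)
        (deriv κ x * (τ x) ^ 2 + κ x * (2 * τ x ^ 1 * deriv τ x)) x :=
      (hdκ x).mul ((hdτ x).pow 2)
    convert h using 1
    have := h1 x hx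
    linear_combination (-(τ x)) * this
  · apply const_of_hasDerivAt_zero J hJ
    intro x hx
    have h : HasDerivAt (fun s =>
        -18 * κ s * τ s + 9 * (κ s) ^ 2 * (τ s) ^ 2 - (2 / 3) * (τ s) ^ 3 + (deriv τ s) ^ 2)
        ((-18 * deriv κ x * τ x + -18 * κ x * deriv τ x) +
          (9 * (2 * κ x ^ 1 * deriv κ x) * (τ x) ^ 2 + 9 * (κ x) ^ 2 * (2 * τ x ^ 1 * deriv τ x))
          - (2 / 3) * (3 * τ x ^ 2 * deriv τ x)
          + 2 * deriv τ x ^ 1 * deriv (deriv τ) x) x := by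
      exact ((((hdκ x).const_mul (-18)).mul (hdτ x)).add
        ((((hdκ x).pow 2).const_mul 9).mul ((hdτ x).pow 2))).sub
        (((hdτ x).pow 3).const_mul (2/3)) |>.add ((hdτ' x).pow 2)
    convert h using 1
    have e1 := h1 x hx
    have e2 := h2 x hx
    linear_combination (18 - 18 * κ x * τ x) * e1 + (-2 * deriv τ x) * e2
end

section
/- Let λ₂, λ₃ be real with 0 < λ₂ < λ₃ and let τ be real with 0 < τ² < 3λ₂. Set ρ₂ = (2(λ₃−λ₂)(2λ₂+λ₃))^{−1/2} and ρ₃ = (2(λ₃−λ₂)(λ₂+2λ₃))^{−1/2}. Then 0 < ρ₂√(3λ₂−τ²)/(ρ₃√(3λ₃−τ²)) ≤ √(λ₂(λ₂+2λ₃)/(λ₃(2λ₂+λ₃))) < 1. -/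
/-! The common factor `2(λ₃ - λ₂)` of `ρ₂⁻²` and `ρ₃⁻²` cancels, so the ratio is
`√(q · (3λ₂ - τ²)/(3λ₃ - τ²))` with `q = (λ₂ + 2λ₃)/(2λ₂ + λ₃)`. Subtracting `τ² ≥ 0` from the
numerator and denominator of `3λ₂/(3λ₃) < 1` can only decrease it, which gives the middle bound;
the last one is `λ₂² < λ₃²`. -/

lemma sub_div_sub_le_div {α : Type*} [Field α] [LinearOrder α] [IsStrictOrderedRing α]
    {a b t : α} (ht : 0 ≤ t) (hab : a ≤ b) (htb : t < b) : (a - t) / (b - t) ≤ a / b := by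
  rw [div_le_div_iff₀ (sub_pos.2 htb) (ht.trans_lt htb)]
  nlinarith

lemma Real.inv_sqrt_mul_div_inv_sqrt_mul {a b c : ℝ} (hc : 0 < c) (ha : 0 ≤ a) :
    (√(c * a))⁻¹ / (√(c * b))⁻¹ = √(b / a) := by
  rw [inv_div_inv, ← Real.sqrt_div' _ (mul_nonneg hc.le ha), mul_div_mul_left _ _ hc.ne']

theorem ratio_bound_neg_polarized_general (l₂ l₃ τ : ℝ) (h2 : 0 < l₂) (h23 : l₂ < l₃)
    (hτ : τ ^ 2 < 3 * l₂) :
    0 < (Real.sqrt (2 * (l₃ - l₂) * (2 * l₂ + l₃)))⁻¹ * Real.sqrt (3 * l₂ - τ ^ 2) /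
        ((Real.sqrt (2 * (l₃ - l₂) * (l₂ + 2 * l₃)))⁻¹ * Real.sqrt (3 * l₃ - τ ^ 2)) ∧
    (Real.sqrt (2 * (l₃ - l₂) * (2 * l₂ + l₃)))⁻¹ * Real.sqrt (3 * l₂ - τ ^ 2) /
        ((Real.sqrt (2 * (l₃ - l₂) * (l₂ + 2 * l₃)))⁻¹ * Real.sqrt (3 * l₃ - τ ^ 2)) ≤
      Real.sqrt (l₂ * (l₂ + 2 * l₃) / (l₃ * (2 * l₂ + l₃))) ∧
    Real.sqrt (l₂ * (l₂ + 2 * l₃) / (l₃ * (2 * l₂ + l₃))) < 1 := by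
  have h3 : 0 < l₃ := h2.trans h23
  have hlt : √(l₂ * (l₂ + 2 * l₃) / (l₃ * (2 * l₂ + l₃))) < 1 := by
    rw [Real.sqrt_lt' one_pos, one_pow, div_lt_one (by positivity)]
    nlinarith
  set q := (l₂ + 2 * l₃) / (2 * l₂ + l₃)
  have hq : 0 < q := by positivity
  have hratio : (Real.sqrt (2 * (l₃ - l₂) * (2 * l₂ + l₃)))⁻¹ * Real.sqrt (3 * l₂ - τ ^ 2) /
      ((Real.sqrt (2 * (l₃ - l₂) * (l₂ + 2 * l₃)))⁻¹ * Real.sqrt (3 * l₃ - τ ^ 2)) =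
      √(q * ((3 * l₂ - τ ^ 2) / (3 * l₃ - τ ^ 2))) := by
    rw [mul_div_mul_comm, Real.inv_sqrt_mul_div_inv_sqrt_mul (by linarith) (by positivity),
      ← Real.sqrt_div' _ (by linarith), ← Real.sqrt_mul hq.le]
  have hbound : l₂ * (l₂ + 2 * l₃) / (l₃ * (2 * l₂ + l₃)) = q * (3 * l₂ / (3 * l₃)) := by
    simp only [q]
    field_simp
  rw [hratio]
  refine ⟨Real.sqrt_pos.2 (mul_pos hq (div_pos (by linarith) (by linarith))), ?_, hlt⟩
  rw [hbound]
  exact Real.sqrt_le_sqrt (mul_le_mul_of_nonneg_left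
    (sub_div_sub_le_div (sq_nonneg τ) (by linarith) (by linarith)) hq.le)

/-- For 0 < λ₂ < λ₃ and 0 < τ² < 3λ₂, with ρ₂ = (2(λ₃−λ₂)(2λ₂+λ₃))^{−1/2} and
ρ₃ = (2(λ₃−λ₂)(λ₂+2λ₃))^{−1/2}:
0 < ρ₂√(3λ₂−τ²)/(ρ₃√(3λ₃−τ²)) ≤ √(λ₂(λ₂+2λ₃)/(λ₃(2λ₂+λ₃))) < 1. -/
theorem ratio_bound_neg_polarized (l₂ l₃ τ : ℝ) (h2 : 0 < l₂) (h23 : l₂ < l₃)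
    (hτ0 : 0 < τ ^ 2) (hτ : τ ^ 2 < 3 * l₂) :
    0 < (Real.sqrt (2 * (l₃ - l₂) * (2 * l₂ + l₃)))⁻¹ * Real.sqrt (3 * l₂ - τ ^ 2) /
        ((Real.sqrt (2 * (l₃ - l₂) * (l₂ + 2 * l₃)))⁻¹ * Real.sqrt (3 * l₃ - τ ^ 2)) ∧
    (Real.sqrt (2 * (l₃ - l₂) * (2 * l₂ + l₃)))⁻¹ * Real.sqrt (3 * l₂ - τ ^ 2) /
        ((Real.sqrt (2 * (l₃ - l₂) * (l₂ + 2 * l₃)))⁻¹ * Real.sqrt (3 * l₃ - τ ^ 2)) ≤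
      Real.sqrt (l₂ * (l₂ + 2 * l₃) / (l₃ * (2 * l₂ + l₃))) ∧
    Real.sqrt (l₂ * (l₂ + 2 * l₃) / (l₃ * (2 * l₂ + l₃))) < 1 :=
  ratio_bound_neg_polarized_general l₂ l₃ τ h2 h23 hτ
end
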